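/- Let M be a partial matching on [n] with |M| = m edges, and let K be a uniformly random subset of [n] of fixed size k. Then the probability that K contains no edge of M (i.e., no edge of M has both endpoints in K) is at most (1 - k(k-1)/(n(n-1)))^m. -/

import Mathlib

open scoped Classical

/-!
Induct on the matching. After removing an edge `uv`, the `k`-sets avoiding the other edges form a
down-set `𝒟` which does not see `u` and `v`, so it suffices that at least a fraction
`k(k-1)/(n(n-1))` of `𝒟` contains both `u` and `v`. With `a_i` the number of `i`-subsets of
`[n] \ {u, v}` in `𝒟`, the sets of `𝒟` number `a_k + 2a_{k-1} + a_{k-2}` and those containing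
`u, v` number `a_{k-2}`; the local LYM inequality `(i+1) a_{i+1} ≤ (n-2-i) a_i` for down-sets then
gives the bound.
-/

open Finset

section Levels

variable {α : Type*} [DecidableEq α]

theorem card_filter_powersetCard_succ_insert {x : α} {S : Finset α} (hx : x ∉ S)
    (P : Finset α → Prop) [DecidablePred P] (r : ℕ) :
    #((insert x S).powersetCard (r + 1) |>.filter P)
      = #(S.powersetCard (r + 1) |>.filter P)
        + #(S.powersetCard r |>.filter fun T => P (insert x T)) := by
  have hxT : ∀ T ∈ S.powersetCard r, x ∉ T := fun T hT hxT =>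
    hx ((mem_powersetCard.1 hT).1 hxT)
  rw [powersetCard_succ_insert hx, filter_union, filter_image,
    card_union_of_disjoint, card_image_of_injOn]
  · intro T hT T' hT' h
    rw [← erase_insert (hxT T (mem_filter.1 hT).1),
      ← erase_insert (hxT T' (mem_filter.1 hT').1)]
    exact congrArg (·.erase x) h
  · refine disjoint_left.2 fun K hK hK' => hx ?_
    obtain ⟨T, -, rfl⟩ := mem_image.1 hK'
    exact (mem_powersetCard.1 (mem_filter.1 hK).1).1 (mem_insert_self x T)

theorem card_filter_mem_powersetCard_succ_insert {x : α} {S : Finset α} (hx : x ∉ S)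
    (P : Finset α → Prop) [DecidablePred P] (r : ℕ) :
    #((insert x S).powersetCard (r + 1) |>.filter fun K => x ∈ K ∧ P K)
      = #(S.powersetCard r |>.filter fun T => P (insert x T)) := by
  rw [card_filter_powersetCard_succ_insert hx, filter_false_of_mem fun K hK hxK =>
    hx ((mem_powersetCard.1 hK).1 hxK.1)]
  simp

-- The local LYM inequality for a down-set.
theorem card_filter_powersetCard_succ_mul_le {P : Finset α → Prop} [DecidablePred P]
    (hP : ∀ ⦃S T⦄, T ⊆ S → P S → P T) (G : Finset α) (r : ℕ) :
    #(G.powersetCard (r + 1) |>.filter P) * (r + 1)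
      ≤ #(G.powersetCard r |>.filter P) * (#G - r) := by
  refine card_mul_le_card_mul (fun S T => T ⊆ S) (fun S hS => ?_) (fun T hT => ?_)
  · obtain ⟨⟨hSG, hS⟩, hPS⟩ := mem_filter.1 hS |>.imp_left mem_powersetCard.1
    calc r + 1 = #(S.powersetCard r) := by
          rw [card_powersetCard, hS, Nat.choose_succ_self_right]
      _ ≤ _ := card_le_card fun T hT => by
        obtain ⟨hTS, hT⟩ := mem_powersetCard.1 hT
        exact (mem_bipartiteAbove _).2 ⟨mem_filter.2 ⟨mem_powersetCard.2 ⟨hTS.trans hSG, hT⟩,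
          hP hTS hPS⟩, hTS⟩
  · obtain ⟨⟨hTG, hT⟩, -⟩ := mem_filter.1 hT |>.imp_left mem_powersetCard.1
    calc _ ≤ #((G \ T).image fun a => insert a T) := card_le_card fun S hS => by
          obtain ⟨hS, hTS⟩ := (mem_bipartiteBelow _).1 hS
          obtain ⟨hSG, hS⟩ := mem_powersetCard.1 (mem_filter.1 hS).1
          obtain ⟨a, haT, rfl⟩ := exists_eq_insert_iff.2 ⟨hTS, by rw [hS, hT]⟩
          exact mem_image_of_mem _ (mem_sdiff.2 ⟨hSG (mem_insert_self a T), haT⟩)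
      _ ≤ #(G \ T) := card_image_le
      _ = #G - r := by rw [card_sdiff_of_subset hTG, hT]

-- Chain the two steps and use `x(x-1) + 2xy + y(y-1) = (x+y)(x+y-1)` with `x = N-j`, `y = j+2`.
theorem sum_levels_mul_le_of_lym {N j a₀ a₁ a₂ : ℕ} (hj : j ≤ N)
    (h₁ : a₁ * (j + 1) ≤ a₀ * (N - j)) (h₂ : a₂ * (j + 2) ≤ a₁ * (N - (j + 1))) :
    (j + 2) * (j + 1) * (a₂ + 2 * a₁ + a₀) ≤ (N + 2) * (N + 1) * a₀ := by
  obtain ⟨x, rfl⟩ := Nat.exists_eq_add_of_le hj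
  rcases x with _ | y
  · obtain rfl : a₁ = 0 := by simpa using h₁
    obtain rfl : a₂ = 0 := by simpa using h₂
    simp
  · rw [Nat.add_sub_cancel_left] at h₁
    rw [show j + (y + 1) - (j + 1) = y by omega] at h₂
    nlinarith [Nat.mul_le_mul_left (j + 1) h₂, Nat.mul_le_mul_left y h₁,
      Nat.mul_le_mul_left (2 * (j + 2)) h₁]

theorem mul_card_filter_powersetCard_le_pair {P : Finset α → Prop} [DecidablePred P]
    (hP : ∀ ⦃S T⦄, T ⊆ S → P S → P T) {u v : α} (hu : ∀ T, P (insert u T) ↔ P T)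
    (hv : ∀ T, P (insert v T) ↔ P T) (huv : u ≠ v) {G : Finset α} (huG : u ∉ G) (hvG : v ∉ G)
    {k : ℕ} (hk : k ≤ #G + 2) :
    k * (k - 1) * #((insert u (insert v G)).powersetCard k |>.filter P)
      ≤ (#G + 2) * (#G + 1)
        * #((insert u (insert v G)).powersetCard k |>.filter fun K => u ∈ K ∧ v ∈ K ∧ P K) := by
  obtain _ | _ | j := k
  · simp
  · simp
  have huvG : u ∉ insert v G := by simp [huv, huG]
  have hpair : #((insert u (insert v G)).powersetCard (j + 2) |>.filter
      fun K => u ∈ K ∧ v ∈ K ∧ P K) = #(G.powersetCard j |>.filter P) := by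
    rw [card_filter_mem_powersetCard_succ_insert huvG]
    simp_rw [mem_insert, huv.symm, false_or, hu]
    rw [card_filter_mem_powersetCard_succ_insert hvG]
    simp_rw [hv]
  rw [hpair, card_filter_powersetCard_succ_insert huvG]
  simp_rw [hu]
  rw [card_filter_powersetCard_succ_insert hvG, card_filter_powersetCard_succ_insert hvG]
  simp_rw [hv]
  have := sum_levels_mul_le_of_lym (N := #G) (j := j) (by omega)
    (card_filter_powersetCard_succ_mul_le hP G j)
    (card_filter_powersetCard_succ_mul_le hP G (j + 1))
  rw [show j + 1 + 1 - 1 = j + 1 from rfl]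
  linarith

theorem ratio_mul_card_filter_le_pair [Fintype α] {P : Finset α → Prop} [DecidablePred P]
    (hP : ∀ ⦃S T⦄, T ⊆ S → P S → P T) {u v : α} (hu : ∀ T, P (insert u T) ↔ P T)
    (hv : ∀ T, P (insert v T) ↔ P T) (huv : u ≠ v) {k : ℕ} (hk : k ≤ Fintype.card α) :
    (k : ℝ) * (k - 1) / ((Fintype.card α : ℝ) * (Fintype.card α - 1))
        * #(univ.powersetCard k |>.filter P)
      ≤ #(univ.powersetCard k |>.filter fun K => u ∈ K ∧ v ∈ K ∧ P K) := by
  set G : Finset α := univ \ {u, v}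
  have hG : insert u (insert v G) = univ := by
    ext x
    by_cases x = u <;> by_cases x = v <;> simp_all [G]
  have hGcard : Fintype.card α = #G + 2 := by
    have := card_le_univ ({u, v} : Finset α)
    rw [card_sdiff_of_subset (subset_univ _), card_pair huv, card_univ] at *
    omega
  have hcorr := mul_card_filter_powersetCard_le_pair hP hu hv huv (G := G) (by simp [G])
    (by simp [G]) (k := k) (by omega)
  rw [hG] at hcorr
  have hcast : ((k * (k - 1) : ℕ) : ℝ) = k * (k - 1) := by cases k <;> simp
  have hden : (Fintype.card α : ℝ) * (Fintype.card α - 1) = ((#G + 2) * (#G + 1) : ℕ) := by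
    rw [hGcard]
    push_cast
    ring
  rw [div_mul_eq_mul_div, div_le_iff₀ (by rw [hden]; positivity), hden, ← hcast]
  exact_mod_cast hcorr.trans_eq (mul_comm _ _)

end Levels

section Matching

variable {α : Type*}

def Avoids (M : Finset (Sym2 α)) (K : Finset α) : Prop :=
  ∀ e ∈ M, ¬ ∀ v ∈ e, v ∈ K

theorem Avoids.anti {M : Finset (Sym2 α)} {S T : Finset α} (hTS : T ⊆ S) (h : Avoids M S) :
    Avoids M T :=
  fun e he heT => h e he fun v hv => hTS (heT v hv)

variable [DecidableEq α]

theorem avoids_insert_iff {M : Finset (Sym2 α)} {x : α} (hx : ∀ e ∈ M, x ∉ e) (K : Finset α) :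
    Avoids M (insert x K) ↔ Avoids M K := by
  refine forall₂_congr fun e he => not_congr <| forall₂_congr fun v hv => ?_
  rw [mem_insert, or_iff_right]
  rintro rfl
  exact hx e he hv

theorem avoids_insert_mk_iff {M : Finset (Sym2 α)} {u v : α} {K : Finset α} :
    Avoids (insert s(u, v) M) K ↔ ¬ (u ∈ K ∧ v ∈ K) ∧ Avoids M K := by
  unfold Avoids
  rw [forall_mem_insert]
  simp only [Sym2.mem_iff, forall_eq_or_imp, forall_eq]

theorem card_filter_avoids_insert_mk_add {M : Finset (Sym2 α)} {u v : α}
    (s : Finset (Finset α)) :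
    #(s.filter (Avoids (insert s(u, v) M))) + #(s.filter fun K => u ∈ K ∧ v ∈ K ∧ Avoids M K)
      = #(s.filter (Avoids M)) := by
  rw [← card_filter_add_card_filter_not (s := s.filter (Avoids M)) (fun K => u ∈ K ∧ v ∈ K),
    filter_filter, filter_filter, add_comm]
  congr 2 <;> ext K <;> simp [avoids_insert_mk_iff] <;> tauto

theorem choose_two_ratio_le_one {k n : ℕ} (hk : k ≤ n) :
    (k : ℝ) * (k - 1) / ((n : ℝ) * (n - 1)) ≤ 1 := by
  have hkn : (k : ℝ) ≤ n := by exact_mod_cast hk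
  rcases n.eq_zero_or_pos with rfl | hn
  · simp
  · have hn : (1 : ℝ) ≤ n := by exact_mod_cast hn
    exact div_le_one_of_le₀ (by nlinarith [k.cast_nonneg (α := ℝ)]) (by nlinarith)

theorem card_filter_avoids_le [Fintype α] (M : Finset (Sym2 α)) (hdiag : ∀ e ∈ M, ¬ e.IsDiag)
    (hdisj : ∀ e ∈ M, ∀ e' ∈ M, e ≠ e' → ∀ v : α, v ∈ e → v ∉ e') {k : ℕ}
    (hk : k ≤ Fintype.card α) :
    (#(univ.powersetCard k |>.filter (Avoids M)) : ℝ)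
      ≤ (1 - (k : ℝ) * (k - 1) / ((Fintype.card α : ℝ) * (Fintype.card α - 1))) ^ #M
        * (Fintype.card α).choose k := by
  set p : ℝ := k * (k - 1) / ((Fintype.card α : ℝ) * (Fintype.card α - 1))
  induction M using Finset.induction_on with
  | empty =>
    rw [card_empty, pow_zero, one_mul, ← card_univ, ← card_powersetCard]
    exact_mod_cast card_filter_le _ _
  | insert e M he ih =>
    induction e using Sym2.inductionOn with | hf u v => ?_
    have huv : u ≠ v := fun h => hdiag _ (mem_insert_self _ _) (Sym2.mk_isDiag_iff.2 h)
    have hfree : ∀ x ∈ s(u, v), ∀ e ∈ M, x ∉ e := fun x hx e he' =>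
      hdisj _ (mem_insert_self _ _) e (mem_insert_of_mem he') (ne_of_mem_of_not_mem he' he).symm
        x hx
    specialize ih (fun e he => hdiag e (mem_insert_of_mem he))
      (fun e he e' he' => hdisj e (mem_insert_of_mem he) e' (mem_insert_of_mem he'))
    have hpair := ratio_mul_card_filter_le_pair (fun _ _ => Avoids.anti)
      (avoids_insert_iff (hfree u (Sym2.mem_mk_left u v)))
      (avoids_insert_iff (hfree v (Sym2.mem_mk_right u v))) huv hk
    have hsplit := card_filter_avoids_insert_mk_add (M := M) (u := u) (v := v)
      (univ.powersetCard k)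
    calc (#(univ.powersetCard k |>.filter (Avoids (insert s(u, v) M))) : ℝ)
        = #(univ.powersetCard k |>.filter (Avoids M))
          - #(univ.powersetCard k |>.filter fun K => u ∈ K ∧ v ∈ K ∧ Avoids M K) := by
          rw [← hsplit]
          push_cast
          ring
      _ ≤ (1 - p) * #(univ.powersetCard k |>.filter (Avoids M)) := by linarith
      _ ≤ (1 - p) * ((1 - p) ^ #M * (Fintype.card α).choose k) :=
          mul_le_mul_of_nonneg_left ih (sub_nonneg.2 (choose_two_ratio_le_one hk))
      _ = (1 - p) ^ #(insert s(u, v) M) * (Fintype.card α).choose k := by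
          rw [card_insert_of_notMem he, pow_succ]
          ring

end Matching

theorem stmt_0_general (n k m : ℕ) (hk : k ≤ n)
    (M : Finset (Sym2 (Fin n)))
    (hcard : M.card = m)
    (hdiag : ∀ e ∈ M, ¬ e.IsDiag)
    (hdisj : ∀ e ∈ M, ∀ e' ∈ M, e ≠ e' → ∀ v : Fin n, v ∈ e → v ∉ e') :
    ((((Finset.univ : Finset (Fin n)).powersetCard k).filter
        (fun K => ∀ e ∈ M, ¬ (∀ v ∈ e, v ∈ K))).card : ℝ)
      / (n.choose k : ℝ)
    ≤ (1 - (k : ℝ) * (k - 1) / ((n : ℝ) * (n - 1))) ^ m := by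
  have hchoose : (0 : ℝ) < n.choose k := by exact_mod_cast Nat.choose_pos hk
  rw [div_le_iff₀ hchoose, ← hcard]
  have h := card_filter_avoids_le M hdiag hdisj (k := k) (by rwa [Fintype.card_fin])
  rw [Fintype.card_fin] at h
  -- the two filters differ only in their decidability instances
  convert h using 4 <;> rfl

/-- A uniformly random `k`-element subset `K` of `[n]` contains no edge of a
partial matching `M` of size `m` with probability at most
`(1 - k(k-1)/(n(n-1)))^m`. -/
theorem stmt_0 (n k m : ℕ) (hn : 2 ≤ n) (hk : k ≤ n)
    (M : Finset (Sym2 (Fin n)))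
    (hcard : M.card = m)
    (hdiag : ∀ e ∈ M, ¬ e.IsDiag)
    (hdisj : ∀ e ∈ M, ∀ e' ∈ M, e ≠ e' → ∀ v : Fin n, v ∈ e → v ∉ e') :
    ((((Finset.univ : Finset (Fin n)).powersetCard k).filter
        (fun K => ∀ e ∈ M, ¬ (∀ v ∈ e, v ∈ K))).card : ℝ)
      / (n.choose k : ℝ)
    ≤ (1 - (k : ℝ) * (k - 1) / ((n : ℝ) * (n - 1))) ^ m :=
  stmt_0_general n k m hk M hcard hdiag hdisj
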